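/- Let V be a real inner-product-like space with a symmetric bilinear form of signature (1,n), let H ∈ V satisfy H·H > 0, and set Θ = {z ∈ V : z·z > 0 and H·z > 0}. If D ≠ 0 satisfies D·D = 0 and H·D > 0, then the intersection of the topological closure of Θ with the hyperplane D^⊥ equals the ray ℝ≥0·D. -/
import Mathlib


/-- With a bilinear form of signature `(1,n)`, `H` with `H·H > 0`,
`Θ = {z | z·z > 0 ∧ H·z > 0}`, and `D ≠ 0` with `D·D = 0`, `H·D > 0`, the
intersection of the closure of `Θ` with `D^⊥` equals the ray `ℝ≥0·D`. -/
theorem stmt_1 (n : ℕ)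
    (B : (Fin (n + 1) → ℝ) → (Fin (n + 1) → ℝ) → ℝ)
    (hB : ∀ x y, B x y = x 0 * y 0 - ∑ i : Fin n, x i.succ * y i.succ)
    (H : Fin (n + 1) → ℝ) (hH : 0 < B H H)
    (D : Fin (n + 1) → ℝ) (hDne : D ≠ 0) (hDD : B D D = 0) (hHD : 0 < B H D) :
    closure {z : Fin (n + 1) → ℝ | 0 < B z z ∧ 0 < B H z} ∩ {x | B x D = 0}
      = {x | ∃ t : ℝ, 0 ≤ t ∧ x = t • D} := by
  have hsym : ∀ x y, B x y = B y x := fun x y => by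
    rw [hB, hB]; simp [mul_comm]
  have hadd : ∀ x y z, B x (y + z) = B x y + B x z := fun x y z => by
    rw [hB, hB, hB]
    simp only [Pi.add_apply]
    rw [Finset.sum_congr rfl (fun i _ => mul_add (x i.succ) (y i.succ) (z i.succ)),
      Finset.sum_add_distrib]
    ring
  have hsmul : ∀ (c : ℝ) x y, B x (c • y) = c * B x y := fun c x y => by
    rw [hB, hB]
    simp only [Pi.smul_apply, smul_eq_mul]
    have e : ∑ i : Fin n, x i.succ * (c * y i.succ)
        = c * ∑ i : Fin n, x i.succ * y i.succ := by
      rw [Finset.mul_sum]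
      exact Finset.sum_congr rfl fun i _ => by ring
    rw [e]
    ring
  -- the closure is contained in the closed cone
  have hsub : closure {z : Fin (n + 1) → ℝ | 0 < B z z ∧ 0 < B H z}
      ⊆ {z | 0 ≤ B z z ∧ 0 ≤ B H z} := by
    apply closure_minimal
    · intro z hz; exact ⟨hz.1.le, hz.2.le⟩
    · have c1 : Continuous fun z : Fin (n + 1) → ℝ => B z z := by
        have : (fun z : Fin (n + 1) → ℝ => B z z)
            = fun z => z 0 * z 0 - ∑ i : Fin n, z i.succ * z i.succ :=
          funext fun z => hB z z
        rw [this]; fun_prop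
      have c2 : Continuous fun z : Fin (n + 1) → ℝ => B H z := by
        have : (fun z : Fin (n + 1) → ℝ => B H z)
            = fun z => H 0 * z 0 - ∑ i : Fin n, H i.succ * z i.succ :=
          funext fun z => hB H z
        rw [this]; fun_prop
      exact (isClosed_le continuous_const c1).inter (isClosed_le continuous_const c2)
  have hD0 : D 0 ≠ 0 := by
    intro h0
    apply hDne
    have hDD' := hDD
    rw [hB, h0] at hDD'
    have hs : ∑ i : Fin n, D i.succ * D i.succ = 0 := by linarith
    have hterm := (Finset.sum_eq_zero_iff_of_nonneg
      (fun i _ => mul_self_nonneg (D i.succ))).mp hs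
    funext j
    refine Fin.cases ?_ (fun i => ?_) j
    · exact h0
    · have := hterm i (Finset.mem_univ i)
      have := mul_self_eq_zero.mp this
      simpa using this
  ext x
  constructor
  · rintro ⟨hxcl, hxD⟩
    obtain ⟨hxx, hHx⟩ := hsub hxcl
    have hxD' : B x D = 0 := hxD
    set t := x 0 / D 0 with ht
    have h1 : ∑ i : Fin n, x i.succ * D i.succ = x 0 * D 0 := by
      rw [hB] at hxD'; linarith
    have hDD' := hDD
    rw [hB] at hDD'
    have h2 : ∑ i : Fin n, D i.succ * D i.succ = D 0 * D 0 := by linarith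
    have hsumsq : ∑ i : Fin n, (x i.succ - t * D i.succ) ^ 2 = -(B x x) := by
      rw [hB]
      have e : ∑ i : Fin n, (x i.succ - t * D i.succ) ^ 2
          = ∑ i : Fin n, (x i.succ * x i.succ
              - (2 * t * (x i.succ * D i.succ) - t ^ 2 * (D i.succ * D i.succ))) :=
        Finset.sum_congr rfl fun i _ => by ring
      rw [e, Finset.sum_sub_distrib, Finset.sum_sub_distrib, ← Finset.mul_sum, ← Finset.mul_sum,
        h1, h2, ht]
      field_simp
      ring
    have hnn : 0 ≤ ∑ i : Fin n, (x i.succ - t * D i.succ) ^ 2 :=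
      Finset.sum_nonneg fun i _ => sq_nonneg _
    have hzero : ∑ i : Fin n, (x i.succ - t * D i.succ) ^ 2 = 0 := by linarith
    have hx_eq : x = t • D := by
      funext j
      refine Fin.cases ?_ (fun i => ?_) j
      · simp only [Pi.smul_apply, smul_eq_mul, ht]
        field_simp
      · have := (Finset.sum_eq_zero_iff_of_nonneg
          (fun i _ => sq_nonneg (x i.succ - t * D i.succ))).mp hzero i (Finset.mem_univ i)
        have h := sq_eq_zero_iff.mp this
        simp only [Pi.smul_apply, smul_eq_mul]
        linarith [sub_eq_zero.mp h]
    refine ⟨t, ?_, hx_eq⟩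
    have hBHx : B H x = t * B H D := by rw [hx_eq, hsmul]
    rw [hBHx] at hHx
    nlinarith
  · rintro ⟨t, ht, rfl⟩
    constructor
    · -- t • D is in the closure: limit of t • D + ε • H as ε → 0⁺
      have hlim : Filter.Tendsto (fun ε : ℝ => t • D + ε • H)
          (nhdsWithin 0 (Set.Ioi 0)) (nhds (t • D)) := by
        have hc : Continuous fun ε : ℝ => t • D + ε • H := by fun_prop
        have h0 := hc.tendsto 0
        simp only [zero_smul, add_zero] at h0
        exact h0.mono_left nhdsWithin_le_nhds
      refine mem_closure_of_tendsto hlim ?_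
      filter_upwards [self_mem_nhdsWithin] with ε hε
      have hε' : (0 : ℝ) < ε := hε
      have hDH : B D H = B H D := hsym D H
      constructor
      · show 0 < B (t • D + ε • H) (t • D + ε • H)
        have e1 : B (t • D + ε • H) (t • D + ε • H)
            = t * (t * B D D + ε * B D H) + ε * (t * B H D + ε * B H H) := by
          rw [hadd, hsmul, hsmul, hsym (t • D + ε • H) D, hsym (t • D + ε • H) H,
            hadd, hsmul, hsmul, hadd, hsmul, hsmul]
        rw [e1, hDD, hDH]
        nlinarith [mul_nonneg (mul_nonneg ht hε'.le) hHD.le, mul_pos (mul_pos hε' hε') hH]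
      · show 0 < B H (t • D + ε • H)
        rw [hadd, hsmul, hsmul]
        nlinarith
    · show B (t • D) D = 0
      rw [hsym (t • D) D, hsmul, hDD, mul_zero]
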